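/- Let Δ be a 1-dimensional forest (a simple graph with no cycles) with edge ideal I ⊂ R = K[x_1,...,x_n], and let edges {x_{i_1}, x_{j_1}}, ..., {x_{i_m}, x_{j_m}} of Δ be given. Then the product of Koszul homology classes [x_{i_1} e_{j_1}] ⋯ [x_{i_m} e_{j_m}] is nonzero in H_•(R/I) if and only if the edges {x_{i_1}, x_{j_1}}, ..., {x_{i_m}, x_{j_m}} are pairwise disconnected. -/

import Mathlib

noncomputable def kd (K : Type) [Field K] (N : ℕ) (M : Type) [AddCommGroup M]
    [Module (MvPolynomial (Fin N) K) M] :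
    (Finset (Fin N) → M) →ₗ[MvPolynomial (Fin N) K] (Finset (Fin N) → M) where
  toFun z s := ∑ j ∈ sᶜ, ((-1 : ℤ) ^ ((s.filter (· < j)).card)) •
      ((MvPolynomial.X j : MvPolynomial (Fin N) K) • z (insert j s))
  map_add' x y := by
    funext s
    try dsimp only
    simp only [Pi.add_apply, smul_add, Finset.sum_add_distrib]
  map_smul' r x := by
    funext s
    try dsimp only
    simp only [Pi.smul_apply, RingHom.id_apply, Finset.smul_sum]
    exact Finset.sum_congr rfl fun j _ => by
      rw [smul_comm r ((-1 : ℤ) ^ ((s.filter (· < j)).card)), smul_comm r (MvPolynomial.X j : MvPolynomial (Fin N) K)]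

noncomputable def ZB (K : Type) [Field K] (N : ℕ) (M : Type) [AddCommGroup M]
    [Module (MvPolynomial (Fin N) K) M] : Submodule (MvPolynomial (Fin N) K) (Finset (Fin N) → M) :=
  LinearMap.ker (kd K N M)

noncomputable def Bd (K : Type) [Field K] (N : ℕ) (M : Type) [AddCommGroup M]
    [Module (MvPolynomial (Fin N) K) M] : Submodule (MvPolynomial (Fin N) K) (Finset (Fin N) → M) :=
  LinearMap.range (kd K N M)

@[reducible] def Hmod (K : Type) [Field K] (N : ℕ) (M : Type) [AddCommGroup M]
    [Module (MvPolynomial (Fin N) K) M] :=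
  (ZB K N M) ⧸ (Submodule.comap (ZB K N M).subtype (Bd K N M))

open scoped Classical in
noncomputable def classOf (K : Type) [Field K] (N : ℕ) (M : Type) [AddCommGroup M]
    [Module (MvPolynomial (Fin N) K) M] (z : Finset (Fin N) → M) : Hmod K N M :=
  if h : z ∈ ZB K N M then Submodule.Quotient.mk ⟨z, h⟩ else 0


variable {V : Type} [DecidableEq V]

/-- A simplicial complex presented by its (finite) set of facets: the facets are
nonempty and form an antichain under inclusion (facets are the maximal faces). -/
def IsComplex (Δ : Finset (Finset V)) : Prop :=
  (∀ F ∈ Δ, F.Nonempty) ∧ ∀ F ∈ Δ, ∀ G ∈ Δ, F ⊆ G → F = G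

/-- `c 0, c 1, …, c n` is a chain of facets of `Δ`: consecutive members intersect
nontrivially. -/
def IsChainSeq (Δ : Finset (Finset V)) (c : ℕ → Finset V) (n : ℕ) : Prop :=
  (∀ i ≤ n, c i ∈ Δ) ∧ ∀ i < n, (c i ∩ c (i + 1)).Nonempty

/-- A proper chain: a chain with `dim (c i ∩ c (i+1)) = dim (c (i+1)) - 1` for all `i`
(expressed via cardinalities), going from a facet of larger (or equal) dimension to one of
smaller dimension. -/
def IsProperChainSeq (Δ : Finset (Finset V)) (c : ℕ → Finset V) (n : ℕ) : Prop :=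
  IsChainSeq Δ c n ∧ (c n).card ≤ (c 0).card ∧
    ∀ i < n, (c i ∩ c (i + 1)).card + 1 = (c (i + 1)).card

/-- An irredundant chain: no proper subsequence (with the same endpoints) is again a chain. -/
def IsIrredChainSeq (Δ : Finset (Finset V)) (c : ℕ → Finset V) (n : ℕ) : Prop :=
  IsChainSeq Δ c n ∧ ∀ m < n, ∀ g : ℕ → ℕ, StrictMonoOn g (Set.Iic m) →
    g 0 = 0 → g m = n → ¬ IsChainSeq Δ (c ∘ g) m

/-- An irredundant proper chain: no proper subsequence (with the same endpoints) is again a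
proper chain. -/
def IsIrredProperChainSeq (Δ : Finset (Finset V)) (c : ℕ → Finset V) (n : ℕ) : Prop :=
  IsProperChainSeq Δ c n ∧ ∀ m < n, ∀ g : ℕ → ℕ, StrictMonoOn g (Set.Iic m) →
    g 0 = 0 → g m = n → ¬ IsProperChainSeq Δ (c ∘ g) m

/-- `F` is a leaf of the complex with facet set `Δ`. -/
def IsLeaf (Δ : Finset (Finset V)) (F : Finset V) : Prop :=
  F ∈ Δ ∧ (Δ = {F} ∨ ∃ G ∈ Δ, G ≠ F ∧ ∀ H ∈ Δ, H ≠ F → F ∩ H ⊆ F ∩ G)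

/-- The complex is connected: any two facets are joined by a chain. -/
def ComplexConnected (Δ : Finset (Finset V)) : Prop :=
  ∀ F ∈ Δ, ∀ G ∈ Δ, ∃ n c, IsChainSeq Δ c n ∧ c 0 = F ∧ c n = G

/-- Every nonempty subcomplex has a leaf. -/
def HasLeafProp (Δ : Finset (Finset V)) : Prop :=
  ∀ Γ ⊆ Δ, Γ.Nonempty → ∃ F, IsLeaf Γ F

/-- A tree: a (nonempty) connected complex all of whose nonempty subcomplexes have a leaf. -/
def IsTree (Δ : Finset (Finset V)) : Prop :=
  Δ.Nonempty ∧ ComplexConnected Δ ∧ HasLeafProp Δ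

/-- A forest: every connected component is a tree; equivalently every nonempty subcomplex
has a leaf. -/
def IsForest (Δ : Finset (Finset V)) : Prop := HasLeafProp Δ

/-- Pure of dimension `d`: all facets have `d + 1` vertices. -/
def IsPure (Δ : Finset (Finset V)) (d : ℕ) : Prop := ∀ F ∈ Δ, F.card = d + 1

/-- Connected in codimension 1: any two facets (ordered by decreasing dimension) are
joined by a proper chain. -/
def ConnCodim1 (Δ : Finset (Finset V)) : Prop :=
  ∀ F ∈ Δ, ∀ G ∈ Δ, G.card ≤ F.card →
    ∃ n c, IsProperChainSeq Δ c n ∧ c 0 = F ∧ c n = G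

/-- The facets of the link of a face `G` of `Δ`. -/
def LinkFacets (Δ : Finset (Finset V)) (G : Finset V) : Finset (Finset V) :=
  (Δ.filter fun F => G ⊆ F).image fun F => F \ G

/-- Two edges of a graph `Δ` are disconnected: they share no vertex, and no vertex of one is
joined by an edge of `Δ` to a vertex of the other. -/
def Disconnected {V : Type} [DecidableEq V] (Δ : Finset (Finset V)) (E E₂ : Finset V) : Prop :=
  E ∩ E₂ = ∅ ∧ ∀ a ∈ E, ∀ b ∈ E₂, ({a, b} : Finset V) ∉ Δ

/-!
If two of the edges meet or are joined by an edge of `Δ`, then `z = (∏ₖ x_{a k}) e_S`, where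
`S = {b 1, …, b m}`, is an explicit Koszul boundary. The boundary of
`(∏_{i ≠ k} x_{a i}) e_{S ∪ {a k}}` is `± z ± (x_{b k} ∏_{i ≠ k} x_{a i}) e_{S ∖ {b k} ∪ {a k}}`,
because the edge monomials `x_{a i} x_{b i}` kill every other term. The second term vanishes when
some `x_{b k} x_{a l}` lies in `I`, and it is itself a boundary when `{b k, b l}` is an edge.

If the edges are pairwise disconnected, `z` is detected by the linear functional `dualCocycle` on
chains with coefficients in `R`. For each way `σ` of picking one endpoint of every edge, it reads off
the coefficient of `e_{picked}` at the monomial of the unpicked endpoints, signed by the permutation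
that sorts the picked endpoints. No edge divides these monomials, so the functional vanishes on
chains with coefficients in `I`. It vanishes on boundaries because flipping the choice at one edge
pairs off the terms with opposite signs. On a lift of `z` it takes the value `±1`.
-/

open MvPolynomial Finset Function

section Inversions

variable {α : Type*} [LinearOrder α] {m : ℕ}

def invCount (c : Fin m → α) : ℕ := #{pq : Fin m × Fin m | pq.1 < pq.2 ∧ c pq.2 < c pq.1}

lemma card_filter_split_at (Q : Fin m → Prop) [DecidablePred Q] (k : Fin m) :
    #{l | Q l} = #{l | l < k ∧ Q l} + #{l | k < l ∧ Q l} + if Q k then 1 else 0 := by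
  rw [← Fintype.sum_ite_eq' k (fun l => if Q l then 1 else 0)]
  simp only [card_filter, ← sum_add_distrib]
  refine sum_congr rfl fun l _ => ?_
  rcases lt_trichotomy l k with h | rfl | h
  · simp [h, h.ne, not_lt.mpr h.le]
  · simp
  · simp [h, h.ne', not_lt.mpr h.le]

lemma card_filter_lt_gt_add_card_filter_lt_lt (c : Fin m → α) (k : Fin m) {v : α}
    (hv : ∀ l ≠ k, c l ≠ v) :
    #{p | p < k ∧ v < c p} + #{p | p < k ∧ c p < v} = k := by
  rw [← Fin.card_Iio k, ← filter_gt_eq_Iio, eq_comm,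
    ← card_filter_add_card_filter_not (s := {p | p < k}) (fun p => v < c p),
    filter_filter, filter_filter]
  congr 1
  exact congrArg card (filter_congr fun p _ => and_congr_right fun (hp : p < k) =>
    ⟨fun h => lt_of_le_of_ne (not_lt.mp h) (hv p hp.ne), fun h => not_lt.mpr h.le⟩)

lemma card_filter_prod_snd_eq (Q : Fin m → Prop) [DecidablePred Q] (k : Fin m) :
    #{pq : Fin m × Fin m | Q pq.1 ∧ pq.2 = k} = #{p | Q p} := by
  have : ({pq : Fin m × Fin m | Q pq.1 ∧ pq.2 = k} : Finset _) =
      ({p | Q p} : Finset (Fin m)).map (Embedding.sectL _ k) := by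
    ext ⟨p, q⟩
    simp [eq_comm]
  rw [this, card_map]

lemma card_filter_prod_fst_eq (Q : Fin m → Prop) [DecidablePred Q] (k : Fin m) :
    #{pq : Fin m × Fin m | pq.1 = k ∧ Q pq.2} = #{q | Q q} := by
  have : ({pq : Fin m × Fin m | pq.1 = k ∧ Q pq.2} : Finset _) =
      ({q | Q q} : Finset (Fin m)).map (Embedding.sectR k _) := by
    ext ⟨p, q⟩
    simp [eq_comm, and_comm]
  rw [this, card_map]

lemma invCount_update (c : Fin m → α) (k : Fin m) (v : α) :
    invCount (update c k v) =
      #{pq : Fin m × Fin m | pq.1 < pq.2 ∧ pq.1 ≠ k ∧ pq.2 ≠ k ∧ c pq.2 < c pq.1} +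
        #{p | p < k ∧ v < c p} + #{q | k < q ∧ c q < v} := by
  rw [← card_filter_prod_snd_eq (fun p => p < k ∧ v < c p) k,
    ← card_filter_prod_fst_eq (fun q => k < q ∧ c q < v) k, invCount]
  simp only [card_filter, ← sum_add_distrib]
  refine sum_congr rfl fun ⟨p, q⟩ _ => ?_
  by_cases hp : p = k <;> by_cases hq : q = k
  · subst hp hq; simp
  · subst hp; simp [hq]
  · subst hq; simp [hp]
  · simp [hp, hq, update_of_ne]

lemma card_filter_update_lt (c : Fin m → α) (k : Fin m) (v w : α) :
    #{l | update c k v l < w} =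
      #{l | l < k ∧ c l < w} + #{l | k < l ∧ c l < w} + if v < w then 1 else 0 := by
  rw [card_filter_split_at _ k, update_self]
  congr 3 <;> ext l <;> simp +contextual [update_of_ne, LT.lt.ne, LT.lt.ne']

theorem odd_invCount_update_add_card_filter_lt (c : Fin m → α) (k : Fin m) {x y : α}
    (hxy : x ≠ y) (hx : ∀ l ≠ k, c l ≠ x) (hy : ∀ l ≠ k, c l ≠ y) :
    Odd (invCount (update c k x) + #{l | update c k x l < y} +
      (invCount (update c k y) + #{l | update c k y l < x})) := by
  have hxy' : (if x < y then 1 else 0) + (if y < x then 1 else 0) = 1 := by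
    rcases hxy.lt_or_gt with h | h <;> simp [h, h.not_gt]
  have := card_filter_lt_gt_add_card_filter_lt_lt c k hx
  have := card_filter_lt_gt_add_card_filter_lt_lt c k hy
  rw [Nat.odd_iff, invCount_update, invCount_update, card_filter_update_lt, card_filter_update_lt]
  omega

lemma card_filter_image_lt {ι : Type*} [Fintype ι] {c : ι → α} (hc : Injective c) (x : α) :
    #{i ∈ univ.image c | i < x} = #{l | c l < x} := by
  rw [filter_image, card_image_of_injective _ hc]

end Inversions

lemma neg_one_pow_add_neg_one_pow_of_odd {R : Type*} [CommRing R] {p q : ℕ} (h : Odd (p + q)) :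
    (-1 : R) ^ p + (-1 : R) ^ q = 0 := by
  have hp : (-1 : R) ^ p * (-1) ^ p = 1 := by rw [← pow_add, Even.neg_one_pow ⟨p, rfl⟩]
  have hpq : (-1 : R) ^ p * (-1) ^ q = -1 := by rw [← pow_add, h.neg_one_pow]
  linear_combination (-(-1 : R) ^ q) * hp + (-1 : R) ^ p * hpq

lemma insert_image_update {ι α : Type*} [Fintype ι] [DecidableEq ι] [DecidableEq α]
    (c : ι → α) (k : ι) (x : α) :
    insert (c k) (univ.image (update c k x)) = insert x (univ.image c) := by
  ext v
  simp only [mem_insert, mem_image, mem_univ, true_and]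
  constructor
  · rintro (rfl | ⟨l, rfl⟩)
    · exact Or.inr ⟨k, rfl⟩
    · by_cases hl : l = k
      · subst hl
        simp
      · exact Or.inr ⟨l, (update_of_ne hl x c).symm⟩
  · rintro (rfl | ⟨l, rfl⟩)
    · exact Or.inr ⟨k, update_self k v c⟩
    · by_cases hl : l = k
      · subst hl
        simp
      · exact Or.inr ⟨l, update_of_ne hl x c⟩

lemma exists_eq_of_sum_single_apply_ne_zero {ι α : Type*} [Fintype ι] {d : ι → α} {w : α}
    (h : (∑ k, Finsupp.single (d k) 1 : α →₀ ℕ) w ≠ 0) : ∃ k, d k = w := by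
  contrapose! h
  rw [Finsupp.finsetSum_apply]
  exact sum_eq_zero fun k _ => Finsupp.single_eq_of_ne (h k).symm

section Pick

variable {ι α : Type*} (a b : ι → α)

def pick (σ : ι → Bool) : ι → α := fun k => cond (σ k) (a k) (b k)

lemma pick_swap_ne {k : ι} (hab : a k ≠ b k) (σ : ι → Bool) :
    pick b a σ k ≠ pick a b σ k := by
  cases h : σ k <;> simp [pick, h, hab, hab.symm]

lemma pick_update_not [DecidableEq ι] (σ : ι → Bool) (k : ι) :
    pick a b (update σ k (!σ k)) = update (pick a b σ) k (pick b a σ k) := by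
  funext l
  by_cases hl : l = k
  · subst hl
    cases h : σ l <;> simp [pick, h]
  · simp [pick, hl]

variable [DecidableEq α]

lemma pick_mem (σ : ι → Bool) (k : ι) : pick a b σ k ∈ ({a k, b k} : Finset α) := by
  cases h : σ k <;> simp [pick, h]

lemma pick_swap_mem (σ : ι → Bool) (k : ι) : pick b a σ k ∈ ({a k, b k} : Finset α) :=
  pair_comm (b k) (a k) ▸ pick_mem b a σ k

variable {a b}

lemma eq_of_mem_pair_of_mem_pair
    (hdisj : ∀ k l, k ≠ l → Disjoint ({a k, b k} : Finset α) {a l, b l}) {k l : ι} {x : α}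
    (hk : x ∈ ({a k, b k} : Finset α)) (hl : x ∈ ({a l, b l} : Finset α)) : k = l :=
  by_contra fun h => disjoint_left.mp (hdisj k l h) hk hl

lemma pick_injective (hdisj : ∀ k l, k ≠ l → Disjoint ({a k, b k} : Finset α) {a l, b l})
    (σ : ι → Bool) : Injective (pick a b σ) := fun k l h =>
  eq_of_mem_pair_of_mem_pair hdisj (pick_mem a b σ k) (h ▸ pick_mem a b σ l)

lemma pick_swap_injective
    (hdisj : ∀ k l, k ≠ l → Disjoint ({a k, b k} : Finset α) {a l, b l}) (σ : ι → Bool) :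
    Injective (pick b a σ) := fun k l h =>
  eq_of_mem_pair_of_mem_pair hdisj (pick_swap_mem a b σ k) (h ▸ pick_swap_mem a b σ l)

lemma pick_swap_notMem_image [Fintype ι] (hab : ∀ k, a k ≠ b k)
    (hdisj : ∀ k l, k ≠ l → Disjoint ({a k, b k} : Finset α) {a l, b l})
    (σ : ι → Bool) (k : ι) :
    pick b a σ k ∉ univ.image (pick a b σ) := fun h => by
  obtain ⟨l, -, hl⟩ := mem_image.mp h
  obtain rfl := eq_of_mem_pair_of_mem_pair hdisj (pick_mem a b σ l) (hl ▸ pick_swap_mem a b σ k)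
  exact pick_swap_ne a b (hab l) σ hl.symm

end Pick

section Koszul

variable {K : Type} [Field K] {N : ℕ} {M : Type} [AddCommGroup M]
  [Module (MvPolynomial (Fin N) K) M]

lemma kd_apply (w : Finset (Fin N) → M) (s : Finset (Fin N)) :
    kd K N M w s =
      ∑ j ∈ sᶜ, (-1 : ℤ) ^ #{i ∈ s | i < j} •
        ((X j : MvPolynomial (Fin N) K) • w (insert j s)) :=
  rfl

lemma kd_comp {M' : Type} [AddCommGroup M'] [Module (MvPolynomial (Fin N) K) M']
    (f : M →ₗ[MvPolynomial (Fin N) K] M') (w : Finset (Fin N) → M) :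
    kd K N M' (f ∘ w) = f ∘ kd K N M w := by
  funext s
  simp [kd_apply, map_sum, map_zsmul]

lemma kd_single (T : Finset (Fin N)) (v : M) :
    kd K N M (Pi.single T v) =
      ∑ j ∈ T, Pi.single (T.erase j)
        ((-1 : ℤ) ^ #{i ∈ T.erase j | i < j} • ((X j : MvPolynomial (Fin N) K) • v)) := by
  funext s
  rw [kd_apply, Finset.sum_apply]
  simp only [Pi.single_apply, smul_ite, smul_zero, ← sum_filter]
  refine sum_congr (ext fun j => ?_) fun j hj => ?_
  · simp only [mem_filter, mem_compl]
    constructor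
    · rintro ⟨hjs, rfl⟩
      exact ⟨mem_insert_self j s, (erase_insert hjs).symm⟩
    · rintro ⟨hjT, rfl⟩
      exact ⟨notMem_erase j T, insert_erase hjT⟩
  · obtain ⟨-, rfl⟩ := mem_filter.mp hj
    rfl

lemma neg_one_pow_smul_mem_iff {R : Type*} [Ring R] [Module R M] (p : Submodule R M) (n : ℕ)
    (x : M) : (-1 : ℤ) ^ n • x ∈ p ↔ x ∈ p := by
  rcases neg_one_pow_eq_or ℤ n with h | h <;> simp [h]

lemma single_mem_ZB {T : Finset (Fin N)} {v : M}
    (hv : ∀ j ∈ T, (X j : MvPolynomial (Fin N) K) • v = 0) :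
    Pi.single T v ∈ ZB K N M := by
  rw [ZB, LinearMap.mem_ker, kd_single]
  exact sum_eq_zero fun j hj => by rw [hv j hj, smul_zero, Pi.single_zero]

lemma single_erase_mem_Bd {T : Finset (Fin N)} {j : Fin N} (hj : j ∈ T) (v : M)
    (h : ∀ i ∈ T, i ≠ j →
      Pi.single (T.erase i) ((X i : MvPolynomial (Fin N) K) • v) ∈ Bd K N M) :
    Pi.single (T.erase j) ((X j : MvPolynomial (Fin N) K) • v) ∈ Bd K N M := by
  have hkd : kd K N M (Pi.single T v) ∈ Bd K N M := LinearMap.mem_range_self _ _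
  rw [kd_single, ← add_sum_erase _ _ hj, Pi.single_smul'] at hkd
  refine (neg_one_pow_smul_mem_iff _ _ _).mp ((Submodule.add_mem_iff_left _ ?_).mp hkd)
  exact Submodule.sum_mem _ fun i hi => by
    rw [Pi.single_smul']
    exact Submodule.smul_of_tower_mem _ _ (h i (mem_of_mem_erase hi) (ne_of_mem_erase hi))

lemma coeff_sum_single_kd {m : ℕ} {d : Fin m → Fin N} (hd : Injective d) {s : Finset (Fin N)}
    (hs : ∀ k, d k ∉ s) (W : Finset (Fin N) → MvPolynomial (Fin N) K) :
    coeff (∑ k, Finsupp.single (d k) 1) (kd K N _ W s) =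
      ∑ k, (-1 : K) ^ #{i ∈ s | i < d k} *
        coeff (∑ l ∈ univ.erase k, Finsupp.single (d l) 1) (W (insert (d k) s)) := by
  have hsub : univ.image d ⊆ sᶜ := fun j hj => by
    obtain ⟨k, -, rfl⟩ := mem_image.mp hj
    exact mem_compl.mpr (hs k)
  rw [kd_apply, coeff_sum, ← sum_subset hsub, sum_image hd.injOn]
  · refine sum_congr rfl fun k _ => ?_
    rw [coeff_smul, smul_eq_mul, ← add_sum_erase _ _ (mem_univ k), coeff_X_mul, zsmul_eq_mul]
    push_cast
    rfl
  · intro j _ hj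
    have hμ : (∑ k, Finsupp.single (d k) 1) j = 0 := by
      by_contra h
      obtain ⟨k, rfl⟩ := exists_eq_of_sum_single_apply_ne_zero h
      exact hj (mem_image_of_mem d (mem_univ k))
    rw [coeff_smul, smul_eq_mul, coeff_X_mul', if_neg (Finsupp.notMem_support_iff.mpr hμ),
      smul_zero]

end Koszul

section FacetIdeal

variable (K : Type) [Field K] {N : ℕ}

noncomputable def facetIdeal (Δ : Finset (Finset (Fin N))) : Ideal (MvPolynomial (Fin N) K) :=
  Ideal.span ((fun F => ∏ v ∈ F, X v) '' ↑Δ)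

variable {K} {Δ : Finset (Finset (Fin N))}

lemma X_mul_X_mem_facetIdeal {u v : Fin N} (h : {u, v} ∈ Δ) :
    (X u * X v : MvPolynomial (Fin N) K) ∈ facetIdeal K Δ := by
  refine Ideal.mem_of_dvd _ ?_ (Ideal.subset_span ⟨_, h, rfl⟩)
  by_cases huv : u = v
  · subst huv
    simp
  · exact (prod_pair huv).dvd

lemma coeff_eq_zero_of_mem_facetIdeal {μ : Fin N →₀ ℕ} (hμ : ∀ F ∈ Δ, ∃ v ∈ F, μ v = 0)
    {p : MvPolynomial (Fin N) K} (hp : p ∈ facetIdeal K Δ) : coeff μ p = 0 := by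
  have hI : facetIdeal K Δ = Ideal.span
      ((fun s => monomial s (1 : K)) '' ((fun F => ∑ v ∈ F, Finsupp.single v 1) '' ↑Δ)) := by
    rw [Set.image_image]
    simp only [monomial_sum_one]
    rfl
  rw [hI, mem_ideal_span_monomial_image] at hp
  by_contra h
  obtain ⟨_, ⟨F, hF, rfl⟩, hle⟩ := hp μ (mem_support_iff.mpr h)
  obtain ⟨v, hv, hμv⟩ := hμ F hF
  have := hle v
  simp [Finsupp.finsetSum_apply, Finsupp.single_apply, hv, hμv] at this

lemma ne_of_pair_mem (hdim : ∀ F ∈ Δ, #F = 2) {u v : Fin N} (h : {u, v} ∈ Δ) : u ≠ v := by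
  rintro rfl
  simpa using hdim _ h

end FacetIdeal

section Boundary

variable {K : Type} [Field K] {N m : ℕ} {I : Ideal (MvPolynomial (Fin N) K)}
  (a b : Fin m → Fin N)

lemma X_smul_mk (i : Fin N) (q : MvPolynomial (Fin N) K) :
    (X i : MvPolynomial (Fin N) K) • Ideal.Quotient.mk I q = Ideal.Quotient.mk I (X i * q) :=
  (Submodule.Quotient.mk_smul I _ q).symm

lemma single_X_smul_mk_mem_Bd (T : Finset (Fin N)) {i : Fin N} {q : MvPolynomial (Fin N) K}
    (h : X i * q ∈ I) :
    Pi.single T ((X i : MvPolynomial (Fin N) K) • Ideal.Quotient.mk I q) ∈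
      Bd K N (MvPolynomial (Fin N) K ⧸ I) := by
  rw [X_smul_mk, Ideal.Quotient.eq_zero_iff_mem.mpr h, Pi.single_zero]
  exact zero_mem _

variable {a} in
lemma X_mul_prod_mem {s : Finset (Fin m)} {i : Fin m} (hi : i ∈ s) {u : Fin N}
    (h : X u * X (a i) ∈ I) : X u * ∏ j ∈ s, X (a j) ∈ I :=
  Ideal.mem_of_dvd _ (mul_dvd_mul_left _ (dvd_prod_of_mem _ hi)) h

lemma single_prod_mem_ZB (hba : ∀ i, X (b i) * X (a i) ∈ I) :
    Pi.single (univ.image b) (Ideal.Quotient.mk I (∏ i, X (a i))) ∈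
      ZB K N (MvPolynomial (Fin N) K ⧸ I) :=
  single_mem_ZB fun j hj => by
    obtain ⟨l, -, rfl⟩ := mem_image.mp hj
    rw [X_smul_mk, Ideal.Quotient.eq_zero_iff_mem]
    exact X_mul_prod_mem (mem_univ l) (hba l)

lemma single_prod_mem_Bd_of_single_mem_Bd {k : Fin m} (hk : a k ∉ univ.image b)
    (hab : ∀ i ≠ k, X (a i) * X (b i) ∈ I)
    (h : Pi.single (insert (a k) ((univ.image b).erase (b k)))
      (Ideal.Quotient.mk I (X (b k) * ∏ i ∈ univ.erase k, X (a i))) ∈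
        Bd K N (MvPolynomial (Fin N) K ⧸ I)) :
    Pi.single (univ.image b) (Ideal.Quotient.mk I (∏ i, X (a i))) ∈
      Bd K N (MvPolynomial (Fin N) K ⧸ I) := by
  have key := single_erase_mem_Bd (mem_insert_self (a k) (univ.image b))
    (Ideal.Quotient.mk I (∏ i ∈ univ.erase k, X (a i))) fun j hj hjk => by
      obtain ⟨l, -, rfl⟩ := mem_image.mp ((mem_insert.mp hj).resolve_left hjk)
      by_cases hl : l = k
      · subst hl
        rwa [erase_insert_of_ne hjk.symm, X_smul_mk]
      · exact single_X_smul_mk_mem_Bd _ (X_mul_prod_mem (mem_erase.mpr ⟨hl, mem_univ l⟩)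
          (by rw [mul_comm]; exact hab l hl))
  rwa [erase_insert hk, X_smul_mk,
    mul_prod_erase univ (fun i => (X (a i) : MvPolynomial (Fin N) K)) (mem_univ k)] at key

lemma single_prod_mem_Bd_of_mem {k : Fin m} (hk : a k ∉ univ.image b)
    (hab : ∀ i ≠ k, X (a i) * X (b i) ∈ I)
    (h : X (b k) * ∏ i ∈ univ.erase k, X (a i) ∈ I) :
    Pi.single (univ.image b) (Ideal.Quotient.mk I (∏ i, X (a i))) ∈
      Bd K N (MvPolynomial (Fin N) K ⧸ I) :=
  single_prod_mem_Bd_of_single_mem_Bd a b hk hab <| by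
    rw [Ideal.Quotient.eq_zero_iff_mem.mpr h, Pi.single_zero]
    exact zero_mem _

lemma single_prod_mem_Bd_of_X_mul_X_mem {k l : Fin m} (hkl : k ≠ l) (hk : a k ∉ univ.image b)
    (hl : a l ∉ univ.image b) (hakl : a k ≠ a l) (hab : ∀ i, X (a i) * X (b i) ∈ I)
    (hbb : X (b k) * X (b l) ∈ I) :
    Pi.single (univ.image b) (Ideal.Quotient.mk I (∏ i, X (a i))) ∈
      Bd K N (MvPolynomial (Fin N) K ⧸ I) := by
  refine single_prod_mem_Bd_of_single_mem_Bd a b hk (fun i _ => hab i) ?_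
  set S₁ := insert (a k) ((univ.image b).erase (b k))
  set q := ∏ i ∈ (univ.erase k).erase l, (X (a i) : MvPolynomial (Fin N) K)
  have hlS₁ : a l ∉ S₁ := by
    simp only [S₁, mem_insert, mem_erase, not_or, not_and]
    exact ⟨hakl.symm, fun _ => hl⟩
  have key := single_erase_mem_Bd (mem_insert_self (a l) S₁)
    (Ideal.Quotient.mk I (X (b k) * q)) fun j hj hjl => by
      refine single_X_smul_mk_mem_Bd _ ?_
      rcases mem_insert.mp ((mem_insert.mp hj).resolve_left hjl) with rfl | hj
      · rw [← mul_assoc]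
        exact Ideal.mul_mem_right _ _ (hab k)
      obtain ⟨hjk, hjb⟩ := mem_erase.mp hj
      obtain ⟨r, -, rfl⟩ := mem_image.mp hjb
      by_cases hr : r = l
      · subst hr
        rw [← mul_assoc, mul_comm (X (b r))]
        exact Ideal.mul_mem_right _ _ hbb
      · have hrk : r ≠ k := fun h => hjk (h ▸ rfl)
        rw [mul_left_comm]
        refine Ideal.mul_mem_left _ _ (X_mul_prod_mem ?_ (by rw [mul_comm]; exact hab r))
        exact mem_erase.mpr ⟨hr, mem_erase.mpr ⟨hrk, mem_univ r⟩⟩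
  rwa [erase_insert hlS₁, X_smul_mk, mul_left_comm, mul_prod_erase (univ.erase k)
    (fun i => (X (a i) : MvPolynomial (Fin N) K)) (mem_erase.mpr ⟨hkl.symm, mem_univ l⟩)] at key

end Boundary

section NotDisconnected

variable {K : Type} [Field K] {N m : ℕ} {Δ : Finset (Finset (Fin N))} (a b : Fin m → Fin N)

theorem single_prod_mem_Bd_of_not_disconnected (hdim : ∀ F ∈ Δ, #F = 2)
    (he : ∀ k, {a k, b k} ∈ Δ) (hb : Injective b) {k l : Fin m} (hkl : k ≠ l)
    (h : ¬ Disconnected Δ {a k, b k} {a l, b l}) :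
    Pi.single (univ.image b) (Ideal.Quotient.mk (facetIdeal K Δ) (∏ i, X (a i))) ∈
      Bd K N (MvPolynomial (Fin N) K ⧸ facetIdeal K Δ) := by
  have hab : ∀ i, X (a i) * X (b i) ∈ facetIdeal K Δ := fun i => X_mul_X_mem_facetIdeal (he i)
  have hba : ∀ i, X (b i) * X (a i) ∈ facetIdeal K Δ := fun i => by
    rw [mul_comm]
    exact hab i
  by_cases hP : ∃ i j, i ≠ j ∧ X (a i) * X (a j) ∈ facetIdeal K Δ
  · obtain ⟨i, j, hij, hmem⟩ := hP
    rw [← mul_prod_erase univ (fun i => (X (a i) : MvPolynomial (Fin N) K)) (mem_univ i),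
      Ideal.Quotient.eq_zero_iff_mem.mpr
        (X_mul_prod_mem (mem_erase.mpr ⟨hij.symm, mem_univ j⟩) hmem), Pi.single_zero]
    exact zero_mem _
  push Not at hP
  have hS : ∀ i, a i ∉ univ.image b := by
    intro i hi
    obtain ⟨r, -, hr⟩ := mem_image.mp hi
    have hri : r ≠ i := by
      rintro rfl
      exact ne_of_pair_mem hdim (he r) hr.symm
    exact hP r i hri (hr ▸ hab r)
  have hA : ∀ i j, i ≠ j → X (b i) * X (a j) ∈ facetIdeal K Δ →
      Pi.single (univ.image b) (Ideal.Quotient.mk (facetIdeal K Δ) (∏ i, X (a i))) ∈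
        Bd K N (MvPolynomial (Fin N) K ⧸ facetIdeal K Δ) := fun i j hij hmem =>
    single_prod_mem_Bd_of_mem a b (hS i) (fun r _ => hab r)
      (X_mul_prod_mem (mem_erase.mpr ⟨hij.symm, mem_univ j⟩) hmem)
  rw [Disconnected, not_and_or] at h
  rcases h with hint | hedge
  · obtain ⟨x, hx⟩ := nonempty_iff_ne_empty.mpr hint
    simp only [mem_inter, mem_insert, mem_singleton] at hx
    rcases hx with ⟨rfl | rfl, h₂ | h₂⟩
    · exact hA k l hkl (h₂ ▸ hba k)
    · exact absurd (mem_image_of_mem b (mem_univ l)) (h₂ ▸ hS k)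
    · exact absurd (mem_image_of_mem b (mem_univ k)) (h₂ ▸ hS l)
    · exact absurd (hb h₂) hkl
  · push Not at hedge
    obtain ⟨u, hu, v, hv, huv⟩ := hedge
    simp only [mem_insert, mem_singleton] at hu hv
    rcases hu with rfl | rfl <;> rcases hv with rfl | rfl
    · exact absurd (X_mul_X_mem_facetIdeal huv) (hP k l hkl)
    · exact hA l k hkl.symm (X_mul_X_mem_facetIdeal (pair_comm (a k) (b l) ▸ huv))
    · exact hA k l hkl (X_mul_X_mem_facetIdeal huv)
    · by_cases hakl : a k = a l
      · exact hA k l hkl (hakl ▸ hba k)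
      · exact single_prod_mem_Bd_of_X_mul_X_mem a b hkl (hS k) (hS l) hakl hab
          (X_mul_X_mem_facetIdeal huv)

end NotDisconnected

section DualCocycle

variable {K : Type} [Field K] {N m : ℕ} (a b : Fin m → Fin N)

noncomputable def dualCocycle (W : Finset (Fin N) → MvPolynomial (Fin N) K) : K :=
  ∑ σ : Fin m → Bool, (-1 : K) ^ invCount (pick a b σ) *
    coeff (∑ k, Finsupp.single (pick b a σ k) 1) (W (univ.image (pick a b σ)))

lemma dualCocycle_sub (W W' : Finset (Fin N) → MvPolynomial (Fin N) K) :
    dualCocycle a b (W - W') = dualCocycle a b W - dualCocycle a b W' := by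
  simp only [dualCocycle, Pi.sub_apply, coeff_sub, mul_sub, sum_sub_distrib]

variable {a b}

theorem dualCocycle_kd (hab : ∀ k, a k ≠ b k)
    (hdisj : ∀ k l, k ≠ l → Disjoint ({a k, b k} : Finset (Fin N)) {a l, b l})
    (W : Finset (Fin N) → MvPolynomial (Fin N) K) :
    dualCocycle a b (kd K N _ W) = 0 := by
  set T : (Fin m → Bool) → Fin m → K := fun σ k => (-1 : K) ^ invCount (pick a b σ) *
    ((-1 : K) ^ #{i ∈ univ.image (pick a b σ) | i < pick b a σ k} *
      coeff (∑ l ∈ univ.erase k, Finsupp.single (pick b a σ l) 1)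
        (W (insert (pick b a σ k) (univ.image (pick a b σ)))))
  have hpair : ∀ σ k, T σ k + T (update σ k (!σ k)) k = 0 := by
    intro σ k
    set c := pick a b σ
    set x := pick b a σ k
    have hc : pick a b (update σ k (!σ k)) = update c k x := pick_update_not a b σ k
    have hd : pick b a (update σ k (!σ k)) = update (pick b a σ) k (c k) :=
      pick_update_not b a σ k
    have hν : ∑ l ∈ univ.erase k, Finsupp.single (update (pick b a σ) k (c k) l) 1 =
        ∑ l ∈ univ.erase k, Finsupp.single (pick b a σ l) 1 :=
      sum_congr rfl fun l hl => by rw [update_of_ne (ne_of_mem_erase hl)]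
    have hodd := odd_invCount_update_add_card_filter_lt c k (pick_swap_ne a b (hab k) σ)
      (fun l hl h => hl (eq_of_mem_pair_of_mem_pair hdisj (h ▸ pick_mem a b σ l)
        (pick_swap_mem a b σ k)))
      (fun l hl h => hl (pick_injective hdisj σ h))
    rw [update_eq_self] at hodd
    have hsign := neg_one_pow_add_neg_one_pow_of_odd (R := K) hodd
    rw [pow_add, pow_add] at hsign
    simp only [T, hc, hd, update_self, hν, insert_image_update,
      card_filter_image_lt (pick_injective hdisj σ),
      card_filter_image_lt (hc ▸ pick_injective hdisj _)]
    linear_combination (coeff (∑ l ∈ univ.erase k, Finsupp.single (pick b a σ l) 1)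
      (W (insert x (univ.image c)))) * hsign
  calc dualCocycle a b (kd K N _ W) = ∑ σ, ∑ k, T σ k :=
        sum_congr rfl fun σ _ => by
          rw [coeff_sum_single_kd (pick_swap_injective hdisj σ)
            (pick_swap_notMem_image hab hdisj σ), mul_sum]
    _ = ∑ k, ∑ σ, T σ k := sum_comm
    _ = 0 := sum_eq_zero fun k _ => sum_ninvolution (fun σ => update σ k (!σ k))
        (fun σ => hpair σ k) (fun σ _ h => by simpa using congrFun h k) (fun _ => mem_univ _)
        (fun σ => by simp)

theorem dualCocycle_single_prod (hab : ∀ k, a k ≠ b k)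
    (hdisj : ∀ k l, k ≠ l → Disjoint ({a k, b k} : Finset (Fin N)) {a l, b l}) :
    dualCocycle a b (Pi.single (univ.image b) (∏ k, X (a k)) :
      Finset (Fin N) → MvPolynomial (Fin N) K) = (-1) ^ invCount b := by
  rw [dualCocycle, sum_eq_single (fun _ => false)]
  · have hP : (∏ k, X (a k) : MvPolynomial (Fin N) K) =
        monomial (∑ k, Finsupp.single (a k) 1) 1 :=
      (monomial_sum_one _ _).symm
    rw [show pick a b (fun _ => false) = b from rfl, show pick b a (fun _ => false) = a from rfl,
      Pi.single_eq_same, hP, coeff_monomial, if_pos rfl, mul_one]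
  · intro σ _ hσ
    have hne : univ.image (pick a b σ) ≠ univ.image b := by
      intro h
      obtain ⟨k, hk⟩ := Function.ne_iff.mp hσ
      have hk : σ k = true := by simpa using hk
      refine pick_swap_notMem_image hab hdisj (fun _ => false) k
        (h ▸ mem_image.mpr ⟨k, mem_univ k, ?_⟩)
      simp [pick, hk]
    rw [Pi.single_eq_of_ne hne, coeff_zero, mul_zero]
  · exact fun h => absurd (mem_univ _) h

end DualCocycle

section Disconnected

variable {K : Type} [Field K] {N m : ℕ} {Δ : Finset (Finset (Fin N))} {a b : Fin m → Fin N}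

theorem dualCocycle_eq_zero_of_forall_mem (hdim : ∀ F ∈ Δ, #F = 2)
    (hdisc : ∀ k l, k ≠ l → Disconnected Δ {a k, b k} {a l, b l})
    {W : Finset (Fin N) → MvPolynomial (Fin N) K}
    (hW : ∀ s, W s ∈ facetIdeal K Δ) : dualCocycle a b W = 0 := by
  refine sum_eq_zero fun σ _ => ?_
  rw [coeff_eq_zero_of_mem_facetIdeal (fun F hF => ?_) (hW _), mul_zero]
  obtain ⟨u, v, huv, rfl⟩ := card_eq_two.mp (hdim F hF)
  by_contra! h
  obtain ⟨k, rfl⟩ := exists_eq_of_sum_single_apply_ne_zero (h _ (mem_insert_self _ _))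
  obtain ⟨l, rfl⟩ := exists_eq_of_sum_single_apply_ne_zero
    (h _ (mem_insert_of_mem (mem_singleton_self _)))
  have hkl : k ≠ l := fun h => huv (h ▸ rfl)
  exact (hdisc k l hkl).2 _ (pick_swap_mem a b σ k) _ (pick_swap_mem a b σ l) hF

theorem single_prod_notMem_Bd (hdim : ∀ F ∈ Δ, #F = 2) (he : ∀ k, {a k, b k} ∈ Δ)
    (hdisc : ∀ k l, k ≠ l → Disconnected Δ {a k, b k} {a l, b l}) :
    Pi.single (univ.image b) (Ideal.Quotient.mk (facetIdeal K Δ) (∏ k, X (a k))) ∉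
      Bd K N (MvPolynomial (Fin N) K ⧸ facetIdeal K Δ) := by
  have hab : ∀ k, a k ≠ b k := fun k => ne_of_pair_mem hdim (he k)
  have hdisj : ∀ k l, k ≠ l → Disjoint ({a k, b k} : Finset (Fin N)) {a l, b l} :=
    fun k l hkl => disjoint_iff_inter_eq_empty.mpr (hdisc k l hkl).1
  rintro ⟨w, hw⟩
  obtain ⟨W, rfl⟩ := (Ideal.Quotient.mk_surjective (I := facetIdeal K Δ)).comp_left w
  have hmem : ∀ s, (Pi.single (univ.image b) (∏ k, X (a k)) - kd K N _ W :
      Finset (Fin N) → MvPolynomial (Fin N) K) s ∈ facetIdeal K Δ := by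
    intro s
    rw [Pi.sub_apply, ← Ideal.Quotient.eq, Pi.apply_single
      (fun _ : Finset (Fin N) => Ideal.Quotient.mk (facetIdeal K Δ)) (fun _ => map_zero _), ← hw]
    exact congrFun (kd_comp (Submodule.mkQ (facetIdeal K Δ)) W) s
  have h := dualCocycle_eq_zero_of_forall_mem (a := a) (b := b) hdim hdisc hmem
  rw [dualCocycle_sub, dualCocycle_kd hab hdisj, sub_zero, dualCocycle_single_prod hab hdisj] at h
  exact pow_ne_zero _ (neg_ne_zero.mpr one_ne_zero) h

end Disconnected

open scoped Classical in
/-- The product `[x_{a 1} e_{b 1}] ⋯ [x_{a m} e_{b m}]` is, up to sign, the class of the monomial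
cycle `z = (∏_k x_{a k}) e_{{b 1,…,b m}}` when the `b k` are distinct and `0` otherwise, so its
nonvanishing means that `z` is a cycle which is not a boundary. -/
theorem stmt13_general (K : Type) [Field K] (N : ℕ) (Δ : Finset (Finset (Fin N)))
    (hdim : ∀ F ∈ Δ, F.card = 2)
    (m : ℕ) (a b : Fin m → Fin N) (he : ∀ k, ({a k, b k} : Finset (Fin N)) ∈ Δ)
    (I : Ideal (MvPolynomial (Fin N) K))
    (hI : I = Ideal.span ((fun F => ∏ v ∈ F, (MvPolynomial.X v : MvPolynomial (Fin N) K)) '' ↑Δ))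
    (z : Finset (Fin N) → MvPolynomial (Fin N) K ⧸ I)
    (hz : z = if Function.Injective b then
        (fun s => if s = Finset.image b Finset.univ then
          Ideal.Quotient.mk I (∏ k, MvPolynomial.X (a k)) else 0)
      else 0) :
    (z ∈ ZB K N (MvPolynomial (Fin N) K ⧸ I) ∧ z ∉ Bd K N (MvPolynomial (Fin N) K ⧸ I)) ↔
      (∀ k l, k ≠ l → Disconnected Δ ({a k, b k} : Finset (Fin N)) {a l, b l}) := by
  replace hI : I = facetIdeal K Δ := hI
  subst hI hz
  have hsingle : (fun s => if s = univ.image b then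
      Ideal.Quotient.mk (facetIdeal K Δ) (∏ k, X (a k)) else 0) =
      Pi.single (univ.image b) (Ideal.Quotient.mk (facetIdeal K Δ) (∏ k, X (a k))) := by
    funext s
    simp only [Pi.single_apply]
  constructor
  · rintro ⟨-, hz⟩ k l hkl
    by_contra h
    by_cases hb : Injective b
    · rw [if_pos hb] at hz
      exact hz (hsingle ▸ single_prod_mem_Bd_of_not_disconnected a b hdim he hb hkl h)
    · rw [if_neg hb] at hz
      exact hz (zero_mem _)
  · intro hdisc
    have hb : Injective b := fun k l h => by_contra fun hkl =>
      eq_empty_iff_forall_notMem.mp (hdisc k l hkl).1 (b l) (by simp [h])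
    rw [if_pos hb, hsingle]
    exact ⟨single_prod_mem_ZB a b fun i =>
        X_mul_X_mem_facetIdeal (pair_comm (a i) (b i) ▸ he i),
      single_prod_notMem_Bd hdim he hdisc⟩

open scoped Classical in
/-- Corollary 2.14. Let `Δ` be a 1-dimensional forest with edge ideal
`I` and let `{x_{a k}, x_{b k}}`, `k = 1,…,m`, be edges of `Δ`. The product of the Koszul
homology classes `[x_{a 1} e_{b 1}] ⋯ [x_{a m} e_{b m}]` is nonzero in `H_•(R/I)` iff the
edges are pairwise disconnected. (The product of these classes is, up to sign, the class of
the monomial cycle `z = (∏_k x_{a k}) e_{{b 1,…,b m}}` when the `b k` are distinct, and is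
`0` otherwise; so nonvanishing of the product means that `z` is a cycle which is not a
boundary.) -/
theorem stmt13 (K : Type) [Field K] (N : ℕ) (Δ : Finset (Finset (Fin N)))
    (hforest : IsForest Δ) (hdim : ∀ F ∈ Δ, F.card = 2)
    (m : ℕ) (a b : Fin m → Fin N) (he : ∀ k, ({a k, b k} : Finset (Fin N)) ∈ Δ)
    (I : Ideal (MvPolynomial (Fin N) K))
    (hI : I = Ideal.span ((fun F => ∏ v ∈ F, (MvPolynomial.X v : MvPolynomial (Fin N) K)) '' ↑Δ))
    (z : Finset (Fin N) → MvPolynomial (Fin N) K ⧸ I)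
    (hz : z = if Function.Injective b then
        (fun s => if s = Finset.image b Finset.univ then
          Ideal.Quotient.mk I (∏ k, MvPolynomial.X (a k)) else 0)
      else 0) :
    (z ∈ ZB K N (MvPolynomial (Fin N) K ⧸ I) ∧ z ∉ Bd K N (MvPolynomial (Fin N) K ⧸ I)) ↔
      (∀ k l, k ≠ l → Disconnected Δ ({a k, b k} : Finset (Fin N)) {a l, b l}) :=
  stmt13_general K N Δ hdim m a b he I hI z hz
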